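/- For all i, j ∈ ℤ with (i, j) ≠ (0, 0) and every s ∈ I_{i,j}: s ∈ I_i; moreover f(s) ∈ I_j if i ≥ 0, while f(s) ∈ I_{−j} if i < 0. -/

import Mathlib

noncomputable section

/-- `β = √2 - 1`. -/
def β : ℝ := Real.sqrt 2 - 1

/-- `ω = √2 + 1`. -/
def ω : ℝ := Real.sqrt 2 + 1

/-- The break points `Δ_i`. -/
def Δ (i : ℤ) : ℝ :=
  if i < 0 then β ^ i.natAbs
  else if i = 0 then β
  else Real.sqrt 2 - β ^ i.natAbs

/-- The intervals `I_i`. -/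
def Iint (i : ℤ) : Set ℝ :=
  if i < 0 then Set.Ioc (Δ (i - 1)) (Δ i)
  else if i = 0 then Set.Ioo β 1
  else Set.Ico (Δ i) (Δ (i + 1))

/-- The defining formula of `f` on the interval `I_i`. -/
def fval (i : ℤ) (s : ℝ) : ℝ :=
  if i < 0 then ω ^ (i.natAbs + 1) * (Δ i - s)
  else if i = 0 then ω * (s - β)
  else ω ^ (i.natAbs + 1) * (s - Δ i)

/-- `f` is the renormalization map: `f 0 = f √2 = 0` and on each interval `I_i`
    it is given by the corresponding affine formula. These conditions determine
    `f` uniquely on `[0, √2]`. -/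
def IsLuroth (f : ℝ → ℝ) : Prop :=
  f 0 = 0 ∧ f (Real.sqrt 2) = 0 ∧ ∀ i : ℤ, ∀ s ∈ Iint i, f s = fval i s

/-- `ℚ(√2)` as a subset of `ℝ`. -/
def QSqrt2 : Set ℝ := {x | ∃ a b : ℚ, x = (a : ℝ) + (b : ℝ) * Real.sqrt 2}

/-- `ℤ[√2]` as a subset of `ℝ`. -/
def ZSqrt2 : Set ℝ := {x | ∃ m n : ℤ, x = (m : ℝ) + (n : ℝ) * Real.sqrt 2}

/-- `M_d = {s ∈ [0,√2] : d·s ∈ ℤ[√2]}`. -/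
def Mset (d : ℤ) : Set ℝ :=
  {s | s ∈ Set.Icc 0 (Real.sqrt 2) ∧ (d : ℝ) * s ∈ ZSqrt2}

/-- Base case of `Δ_{i,j}` (for `i ≤ 0`): the two explicit formulas. -/
def Δ2base (i j : ℤ) : ℝ :=
  if j ≤ 0 then β ^ (i.natAbs + 1) + β ^ (i.natAbs + j.natAbs + 1)
  else β ^ i.natAbs - β ^ (i.natAbs + j.natAbs + 1)

/-- The break points `Δ_{i,j}`. -/
def Δ2 (i j : ℤ) : ℝ :=
  if 0 < i ∨ (i = 0 ∧ 0 < j) then Real.sqrt 2 - Δ2base (-i) (-j)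
  else Δ2base i j

/-- The intervals `I_{i,j}`. -/
def I2 (i j : ℤ) : Set ℝ :=
  if j < 0 then Set.Ioc (Δ2 i (j - 1)) (Δ2 i j)
  else if j = 0 then
    (if i < 0 then Set.Ioo (Δ2 i (-1)) (Δ2 i 0) else Set.Ioo (Δ2 i 0) (Δ2 i 1))
  else Set.Ico (Δ2 i j) (Δ2 i (j + 1))

/-!
On `I_i` the map `f` is the affine map `fval i` of slope `±ω ^ (|i| + 1)`, whose affine inverse
`fvalInv i` maps `(0, √2)` into `I_i`. Since `β ^ 2 + 2β = 1`, the break points are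
`Δ_{i,j} = fvalInv i (Δ_{±j})` (sign `-` iff `i < 0`), so the monotone map `fval i` carries
`I_{i,j}` into `I_{±j} ⊆ (0, √2)`. Hence `s = fvalInv i (fval i s)` lies in `I_i`, and there
`f s = fval i s`.
-/

open Set

lemma sqrt_two_eq_β_add_one : Real.sqrt 2 = β + 1 := by unfold β; ring

lemma ω_eq_β_add_two : ω = β + 2 := by unfold ω β; ring

lemma β_sq_add_two_mul_β : β ^ 2 + 2 * β = 1 := by
  unfold β; nlinarith [Real.sq_sqrt (show (0 : ℝ) ≤ 2 by norm_num)]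

lemma ω_mul_β : ω * β = 1 := by rw [ω_eq_β_add_two]; linear_combination β_sq_add_two_mul_β

lemma β_pos : 0 < β := by
  unfold β; nlinarith [Real.sq_sqrt (show (0 : ℝ) ≤ 2 by norm_num), Real.sqrt_nonneg 2]

lemma β_lt_one : β < 1 := by nlinarith [β_sq_add_two_mul_β, β_pos]

lemma ω_pos : 0 < ω := by rw [ω_eq_β_add_two]; linarith [β_pos]

lemma Δ_one : Δ 1 = 1 := by simp [Δ, sqrt_two_eq_β_add_one]

lemma Iint_zero : Iint 0 = Ioo (Δ 0) (Δ 1) := by rw [Δ_one]; simp [Iint, Δ]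

lemma Iint_subset_Ioo (j : ℤ) : Iint j ⊆ Ioo 0 (Real.sqrt 2) := by
  have hpow : ∀ n : ℕ, 0 < n → β ^ n < 1 := fun n hn => pow_lt_one₀ β_pos.le β_lt_one hn.ne'
  have h1 : (1 : ℝ) < Real.sqrt 2 := by rw [sqrt_two_eq_β_add_one]; linarith [β_pos]
  intro s hs
  unfold Iint Δ at hs
  split_ifs at hs <;> (try omega) <;> obtain ⟨hl, hu⟩ := hs
  · exact ⟨(pow_pos β_pos _).trans hl, hu.trans_lt ((hpow _ (by omega)).trans h1)⟩
  · exact ⟨β_pos.trans hl, hu.trans h1⟩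
  · exact ⟨by linarith [hpow j.natAbs (by omega)], by linarith [pow_pos β_pos (j + 1).natAbs]⟩

lemma fval_strictMono {i : ℤ} (hi : 0 ≤ i) : StrictMono (fval i) := by
  intro a b hab
  unfold fval
  split_ifs
  · omega
  · exact mul_lt_mul_of_pos_left (by linarith) ω_pos
  · exact mul_lt_mul_of_pos_left (by linarith) (pow_pos ω_pos _)

lemma fval_strictAnti {i : ℤ} (hi : i < 0) : StrictAnti (fval i) := by
  intro a b hab
  simp only [fval, if_pos hi]
  exact mul_lt_mul_of_pos_left (by linarith) (pow_pos ω_pos _)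

lemma fval_injective (i : ℤ) : Function.Injective (fval i) := by
  rcases lt_or_ge i 0 with hi | hi
  · exact (fval_strictAnti hi).injective
  · exact (fval_strictMono hi).injective

def fvalInv (i : ℤ) (t : ℝ) : ℝ :=
  if i < 0 then Δ i - β ^ (i.natAbs + 1) * t else Δ i + β ^ (i.natAbs + 1) * t

lemma fval_fvalInv (i : ℤ) (t : ℝ) : fval i (fvalInv i t) = t := by
  have h : ω ^ (i.natAbs + 1) * β ^ (i.natAbs + 1) = 1 := by rw [← mul_pow, ω_mul_β, one_pow]
  unfold fval fvalInv
  split_ifs with hneg hzero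
  · linear_combination t * h
  · subst hzero
    simp only [Δ, lt_irrefl, if_false, if_true]
    linear_combination t * ω_mul_β
  · linear_combination t * h

lemma fvalInv_fval (i : ℤ) (s : ℝ) : fvalInv i (fval i s) = s :=
  fval_injective i (fval_fvalInv i _)

lemma fvalInv_mem_Iint (i : ℤ) {t : ℝ} (ht : t ∈ Ioo 0 (Real.sqrt 2)) : fvalInv i t ∈ Iint i := by
  obtain ⟨ht0, ht2⟩ := ht
  rw [sqrt_two_eq_β_add_one] at ht2
  have hβ : β ^ i.natAbs * (β ^ 2 + 2 * β) = β ^ i.natAbs := by rw [β_sq_add_two_mul_β, mul_one]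
  have h0 : 0 < β ^ (i.natAbs + 1) * t := mul_pos (pow_pos β_pos _) ht0
  have h2 : 0 < β ^ (i.natAbs + 1) * (β + 1 - t) := mul_pos (pow_pos β_pos _) (by linarith)
  rcases lt_trichotomy i 0 with hi | rfl | hi
  · have hi' : i - 1 < 0 := by omega
    simp only [fvalInv, Iint, Δ, hi, hi', if_true, mem_Ioc]
    rw [show (i - 1).natAbs = i.natAbs + 1 by omega]
    constructor
    · ring_nf at hβ h2 ⊢; linarith
    · linarith
  · simp only [Int.natAbs_zero, zero_add, pow_one, pow_zero, one_mul] at hβ h0 h2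
    simp only [fvalInv, Iint, Δ, lt_self_iff_false, if_false, if_true, Int.natAbs_zero, zero_add,
      pow_one, mem_Ioo]
    constructor <;> linarith
  · have hi' : ¬ i + 1 < 0 := by omega
    have hi'' : i + 1 ≠ 0 := by omega
    simp only [fvalInv, Iint, Δ, hi.not_gt, hi.ne', hi', hi'', if_false, mem_Ico]
    rw [show (i + 1).natAbs = i.natAbs + 1 by omega]
    constructor
    · linarith
    · ring_nf at hβ h2 ⊢; linarith

lemma Δ2_eq_fvalInv {i j : ℤ} (hij : ¬(i = 0 ∧ j = 0)) :
    Δ2 i j = fvalInv i (Δ (if i < 0 then -j else j)) := by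
  -- in each of the eight sign cases the two sides differ by `± β ^ |i| * (β ^ 2 + 2 * β - 1)`
  have hβ : β ^ i.natAbs * (β ^ 2 + 2 * β) = β ^ i.natAbs := by rw [β_sq_add_two_mul_β, mul_one]
  simp only [Δ2, Δ2base, fvalInv, Δ]
  split_ifs <;> (try omega) <;> (try simp only [neg_eq_zero] at *) <;> (try subst_vars) <;>
    simp only [Int.natAbs_neg, Int.natAbs_zero, sqrt_two_eq_β_add_one] at * <;>
    ring_nf at * <;> linarith

lemma fval_Δ2 {i j : ℤ} (hij : ¬(i = 0 ∧ j = 0)) :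
    fval i (Δ2 i j) = Δ (if i < 0 then -j else j) := by
  rw [Δ2_eq_fvalInv hij, fval_fvalInv]

lemma fval_mem_Iint_of_mem_I2 {i j : ℤ} (hij : ¬(i = 0 ∧ j = 0)) {s : ℝ} (hs : s ∈ I2 i j) :
    fval i s ∈ Iint (if i < 0 then -j else j) := by
  have key : ∀ k, ¬(i = 0 ∧ k = 0) → fval i (Δ2 i k) = Δ (if i < 0 then -k else k) :=
    fun k hk => fval_Δ2 hk
  unfold I2 at hs
  rcases lt_or_ge i 0 with hi | hi
  · have anti := fval_strictAnti hi
    simp only [if_pos hi] at key ⊢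
    rcases lt_trichotomy j 0 with hj | rfl | hj
    · have h := anti.mapsTo_Ioc (by simpa only [if_pos hj] using hs)
      rw [key _ (by omega), key _ (by omega)] at h
      simpa [Iint, hj, hj.not_gt, hj.ne, show -(j - 1) = -j + 1 by ring] using h
    · have h := anti.mapsTo_Ioo (by simpa only [if_pos hi, lt_irrefl, if_false, if_true] using hs)
      rw [key _ (by omega), key _ (by omega), neg_neg, neg_zero] at h
      rwa [neg_zero, Iint_zero]
    · have h := anti.mapsTo_Ico (by simpa only [hj.not_gt, hj.ne', if_false] using hs)
      rw [key _ (by omega), key _ (by omega)] at h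
      simpa [Iint, hj, show -(j + 1) = -j - 1 by ring] using h
  · have mono := fval_strictMono hi
    simp only [if_neg hi.not_gt] at key ⊢
    rcases lt_trichotomy j 0 with hj | rfl | hj
    · have h := mono.mapsTo_Ioc (by simpa only [if_pos hj] using hs)
      rw [key _ (by omega), key _ (by omega)] at h
      simpa [Iint, hj] using h
    · have h := mono.mapsTo_Ioo (by simpa only [hi.not_gt, lt_irrefl, if_false, if_true] using hs)
      rw [key _ (by omega), key _ (by omega)] at h
      rwa [Iint_zero]
    · have h := mono.mapsTo_Ico (by simpa only [hj.not_gt, hj.ne', if_false] using hs)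
      rw [key _ (by omega), key _ (by omega)] at h
      simpa [Iint, hj.not_gt, hj.ne'] using h

/-- for `(i,j) ≠ (0,0)` and `s ∈ I_{i,j}`, one has `s ∈ I_i`;
moreover `f s ∈ I_j` if `i ≥ 0`, and `f s ∈ I_{-j}` if `i < 0`. -/
theorem I2_refines_Iint (f : ℝ → ℝ) (hf : IsLuroth f) :
    ∀ i j : ℤ, ¬(i = 0 ∧ j = 0) → ∀ s ∈ I2 i j,
      s ∈ Iint i ∧
      (0 ≤ i → f s ∈ Iint j) ∧
      (i < 0 → f s ∈ Iint (-j)) := by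
  intro i j hij s hs
  have ht := fval_mem_Iint_of_mem_I2 hij hs
  have hsi : s ∈ Iint i := fvalInv_fval i s ▸ fvalInv_mem_Iint i (Iint_subset_Ioo _ ht)
  rw [hf.2.2 i s hsi]
  refine ⟨hsi, fun hi => ?_, fun hi => ?_⟩
  · rwa [if_neg hi.not_gt] at ht
  · rwa [if_pos hi] at ht
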